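/- arXiv:1902.08362 — 6 statements merged into one kernel-verified Lean document; each statement's English description precedes it below -/
import Mathlib

section
/- Let X be a nonempty complete metric space, H a complex Hilbert space, and for each A ∈ X let (T_A(t))_{t≥0} be a C₀-semigroup of contractions on H such that for every t ≥ 0 and x ∈ H the map X ∋ A ↦ T_A(t)x ∈ H is continuous. Then the set E = {A ∈ X : (T_A(t))_{t≥0} is exponentially stable} is an F_σ subset of X (a countable union of closed sets). -/
open Filter Topology

/-- `T` is a C₀-semigroup of contractions on the complex Hilbert space `H`. -/
def IsContractionC0Semigroup {H : Type*} [NormedAddCommGroup H] [InnerProductSpace ℂ H]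
    (T : ℝ → H →L[ℂ] H) : Prop :=
  T 0 = 1 ∧
  (∀ s t : ℝ, 0 ≤ s → 0 ≤ t → T (s + t) = T s ∘L T t) ∧
  (∀ t : ℝ, 0 ≤ t → ‖T t‖ ≤ 1) ∧
  (∀ x : H, ContinuousOn (fun t : ℝ => T t x) (Set.Ici 0))

/-- `T` is exponentially stable: `‖T t‖ ≤ C e^{-t a}` for some `C > 0`, `a > 0`
and all `t ≥ 0`. -/
def IsExpStable {H : Type*} [NormedAddCommGroup H] [InnerProductSpace ℂ H]
    (T : ℝ → H →L[ℂ] H) : Prop :=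
  ∃ C > (0 : ℝ), ∃ a > (0 : ℝ), ∀ t : ℝ, 0 ≤ t → ‖T t‖ ≤ C * Real.exp (-(t * a))

/-- for a family of contraction `C₀`-semigroups on a complex Hilbert
space depending strongly continuously on a parameter `A` ranging in a nonempty
complete metric space `X`, the set of parameters for which the semigroup is
exponentially stable is an `F_σ` subset of `X`. -/
theorem expStable_isFSigma
    {X : Type*} [MetricSpace X] [CompleteSpace X] [Nonempty X]
    {H : Type*} [NormedAddCommGroup H] [InnerProductSpace ℂ H] [CompleteSpace H]
    (T : X → ℝ → H →L[ℂ] H)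
    (hsem : ∀ A : X, IsContractionC0Semigroup (T A))
    (hcont : ∀ t : ℝ, 0 ≤ t → ∀ x : H, Continuous fun A : X => T A t x) :
    ∃ F : ℕ → Set X, (∀ n, IsClosed (F n)) ∧
      {A : X | IsExpStable (T A)} = ⋃ n, F n := by
  refine ⟨fun n => ⋂ (t : ℝ) (_ : 0 ≤ t) (x : H),
    {A : X | ‖T A t x‖ ≤ ((n : ℝ) + 1) * Real.exp (-(t * (1 / ((n : ℝ) + 1)))) * ‖x‖},
    ?_, ?_⟩
  · intro n
    refine isClosed_iInter fun t => isClosed_iInter fun ht => isClosed_iInter fun x => ?_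
    exact isClosed_le ((hcont t ht x).norm) continuous_const
  · ext A
    simp only [Set.mem_setOf_eq, Set.mem_iUnion, Set.mem_iInter]
    constructor
    · rintro ⟨C, hC, a, ha, hbound⟩
      obtain ⟨n, hn⟩ := exists_nat_gt (max C (1 / a))
      refine ⟨n, fun t ht x => ?_⟩
      have hCn : C ≤ (n : ℝ) + 1 := le_trans (le_max_left _ _) (by linarith)
      have han : 1 / ((n : ℝ) + 1) ≤ a := by
        rw [div_le_iff₀ (by positivity)]
        rw [← div_le_iff₀' ha]
        exact le_trans (le_max_right C _) (by linarith)
      have h1 : ‖T A t x‖ ≤ C * Real.exp (-(t * a)) * ‖x‖ := by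
        calc ‖T A t x‖ ≤ ‖T A t‖ * ‖x‖ := (T A t).le_opNorm x
        _ ≤ C * Real.exp (-(t * a)) * ‖x‖ :=
          mul_le_mul_of_nonneg_right (hbound t ht) (norm_nonneg x)
      refine h1.trans (mul_le_mul_of_nonneg_right ?_ (norm_nonneg x))
      have : Real.exp (-(t * a)) ≤ Real.exp (-(t * (1 / ((n : ℝ) + 1)))) :=
        Real.exp_le_exp.2 (by nlinarith)
      calc C * Real.exp (-(t * a)) ≤ ((n : ℝ) + 1) * Real.exp (-(t * a)) :=
            mul_le_mul_of_nonneg_right hCn (Real.exp_nonneg _)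
        _ ≤ ((n : ℝ) + 1) * Real.exp (-(t * (1 / ((n : ℝ) + 1)))) :=
            mul_le_mul_of_nonneg_left this (by positivity)
    · rintro ⟨n, hn⟩
      refine ⟨(n : ℝ) + 1, by positivity, 1 / ((n : ℝ) + 1), by positivity, fun t ht => ?_⟩
      exact (T A t).opNorm_le_bound (by positivity) (hn t ht)
end

section
/- Let X be a nonempty complete metric space, H a complex Hilbert space, and for each A ∈ X let (T_A(t))_{t≥0} be a C₀-semigroup of contractions on H such that for every t ≥ 0 and x ∈ H the map X ∋ A ↦ T_A(t)x ∈ H is continuous. Fix x ∈ H. Then Y_x = {A ∈ X : lim_{t→∞} ‖T_A(t)x‖ = 0} is a G_δ subset of X. If moreover the set {A ∈ X : (T_A(t))_{t≥0} is exponentially stable} is dense in X, then Y_x is a dense G_δ subset of X. -/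
/-! Contractivity and the semigroup law make `t ↦ ‖T_A(t) x‖` nonincreasing, so
`Y_x = ⋂ₙ ⋃_{t ≥ 0} {A | ‖T_A(t) x‖ < 1/(n+1)}`, a countable intersection of open sets.
Exponentially stable parameters lie in `Y_x`, so their density gives that of `Y_x`. -/

open Filter Topology

theorem antitoneOn_norm_apply_of_semigroup {𝕜 E : Type*} [NontriviallyNormedField 𝕜]
    [SeminormedAddCommGroup E] [NormedSpace 𝕜 E] {T : ℝ → E →L[𝕜] E}
    (hmul : ∀ s t : ℝ, 0 ≤ s → 0 ≤ t → T (s + t) = T s ∘L T t)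
    (hle : ∀ t : ℝ, 0 ≤ t → ‖T t‖ ≤ 1) (x : E) :
    AntitoneOn (fun t => ‖T t x‖) (Set.Ici 0) := by
  intro s hs t _ hst
  have hsplit : T t = T (t - s) ∘L T s := by
    rw [← hmul _ _ (sub_nonneg.2 hst) hs, sub_add_cancel]
  calc ‖T t x‖ = ‖T (t - s) (T s x)‖ := by rw [hsplit]; rfl
    _ ≤ ‖T (t - s)‖ * ‖T s x‖ := (T (t - s)).le_opNorm _
    _ ≤ 1 * ‖T s x‖ := by gcongr; exact hle _ (sub_nonneg.2 hst)
    _ = ‖T s x‖ := one_mul _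

theorem tendsto_atTop_zero_iff_forall_exists_lt_of_antitoneOn {f : ℝ → ℝ}
    (hf₀ : ∀ t, 0 ≤ f t) (hf : AntitoneOn f (Set.Ici 0)) :
    Tendsto f atTop (𝓝 0) ↔ ∀ n : ℕ, ∃ t ≥ 0, f t < 1 / (n + 1) := by
  constructor
  · intro h n
    obtain ⟨t, ht⟩ :=
      eventually_atTop.1 (h.eventually (eventually_lt_nhds Nat.one_div_pos_of_nat))
    exact ⟨max t 0, le_max_right _ _, ht _ (le_max_left _ _)⟩
  · intro h
    rw [Metric.tendsto_atTop]
    intro ε hε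
    obtain ⟨n, hn⟩ := exists_nat_one_div_lt hε
    obtain ⟨t, ht₀, ht⟩ := h n
    refine ⟨t, fun s hs => ?_⟩
    rw [Real.dist_0_eq_abs, abs_of_nonneg (hf₀ s)]
    calc f s ≤ f t := hf ht₀ (ht₀.trans hs) hs
      _ < 1 / (n + 1) := ht
      _ < ε := hn

theorem isGδ_setOf_tendsto_atTop_zero_of_antitoneOn {X : Type*} [TopologicalSpace X]
    {f : X → ℝ → ℝ} (hf₀ : ∀ A t, 0 ≤ f A t) (hf : ∀ A, AntitoneOn (f A) (Set.Ici 0))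
    (hcont : ∀ t, 0 ≤ t → Continuous fun A => f A t) :
    IsGδ {A | Tendsto (f A) atTop (𝓝 0)} := by
  have hset : {A | Tendsto (f A) atTop (𝓝 0)} =
      ⋂ n : ℕ, ⋃ t ∈ Set.Ici (0 : ℝ), {A | f A t < 1 / (n + 1)} := by
    ext A
    simp only [Set.mem_ofPred_eq, Set.mem_iInter, Set.mem_iUnion, Set.mem_Ici, exists_prop]
    exact tendsto_atTop_zero_iff_forall_exists_lt_of_antitoneOn (hf₀ A) (hf A)
  rw [hset]
  exact IsGδ.iInter fun n => (isOpen_biUnion fun t ht =>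
    isOpen_lt (hcont t ht) continuous_const).isGδ

theorem tendsto_norm_apply_of_isExpStable {H : Type*} [NormedAddCommGroup H]
    [InnerProductSpace ℂ H] {T : ℝ → H →L[ℂ] H} (hT : IsExpStable T) (x : H) :
    Tendsto (fun t => ‖T t x‖) atTop (𝓝 0) := by
  obtain ⟨C, -, a, ha, hbound⟩ := hT
  have hdecay : Tendsto (fun t : ℝ => C * Real.exp (-(t * a)) * ‖x‖) atTop (𝓝 0) := by
    have hexp := Real.tendsto_exp_atBot.comp
      (tendsto_neg_atTop_atBot.comp (tendsto_id.atTop_mul_const ha))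
    simpa using (hexp.const_mul C).mul_const ‖x‖
  refine squeeze_zero' (Eventually.of_forall fun t => norm_nonneg _) ?_ hdecay
  filter_upwards [eventually_ge_atTop 0] with t ht
  calc ‖T t x‖ ≤ ‖T t‖ * ‖x‖ := (T t).le_opNorm x
    _ ≤ C * Real.exp (-(t * a)) * ‖x‖ := by gcongr; exact hbound t ht

theorem orbit_stable_isGδ_and_dense_general
    {X : Type*} [MetricSpace X]
    {H : Type*} [NormedAddCommGroup H] [InnerProductSpace ℂ H]
    (T : X → ℝ → H →L[ℂ] H)
    (hsem : ∀ A : X, IsContractionC0Semigroup (T A))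
    (hcont : ∀ t : ℝ, 0 ≤ t → ∀ y : H, Continuous fun A : X => T A t y)
    (x : H) :
    IsGδ {A : X | Tendsto (fun t : ℝ => ‖T A t x‖) atTop (𝓝 0)} ∧
    (Dense {A : X | IsExpStable (T A)} →
      Dense {A : X | Tendsto (fun t : ℝ => ‖T A t x‖) atTop (𝓝 0)}) := by
  refine ⟨?_, fun hdense => hdense.mono fun A hA => tendsto_norm_apply_of_isExpStable hA x⟩
  exact isGδ_setOf_tendsto_atTop_zero_of_antitoneOn (fun _ _ => norm_nonneg _)
    (fun A => antitoneOn_norm_apply_of_semigroup (hsem A).2.1 (hsem A).2.2.1 x)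
    (fun t ht => (hcont t ht x).norm)

/-- for a family of contraction `C₀`-semigroups on a complex Hilbert
space depending strongly continuously on a parameter ranging in a nonempty
complete metric space `X`, and a fixed vector `x`, the set
`Y_x = {A | ‖T_A(t) x‖ → 0 as t → ∞}` is a `G_δ` subset of `X`; if moreover the
exponentially stable parameters form a dense subset of `X`, then `Y_x` is a dense
`G_δ` subset of `X`. -/
theorem orbit_stable_isGδ_and_dense
    {X : Type*} [MetricSpace X] [CompleteSpace X] [Nonempty X]
    {H : Type*} [NormedAddCommGroup H] [InnerProductSpace ℂ H] [CompleteSpace H]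
    (T : X → ℝ → H →L[ℂ] H)
    (hsem : ∀ A : X, IsContractionC0Semigroup (T A))
    (hcont : ∀ t : ℝ, 0 ≤ t → ∀ y : H, Continuous fun A : X => T A t y)
    (x : H) :
    IsGδ {A : X | Tendsto (fun t : ℝ => ‖T A t x‖) atTop (𝓝 0)} ∧
    (Dense {A : X | IsExpStable (T A)} →
      Dense {A : X | Tendsto (fun t : ℝ => ‖T A t x‖) atTop (𝓝 0)}) :=
  orbit_stable_isGδ_and_dense_general T hsem hcont x
end

section
/- Let X be a nonempty complete metric space, H a separable complex Hilbert space, and for each A ∈ X let (T_A(t))_{t≥0} be a C₀-semigroup of contractions on H such that for every t ≥ 0 and x ∈ H the map X ∋ A ↦ T_A(t)x ∈ H is continuous. Suppose the set {A ∈ X : (T_A(t))_{t≥0} is exponentially stable} is dense in X. Then Y = {A ∈ X : (T_A(t))_{t≥0} is stable} is a dense G_δ subset of X. -/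
/-! Exponential stability implies stability, so density of the stable parameters is immediate.
For the `G_δ` property: contractivity makes every orbit norm `t ↦ ‖T_A(t)x‖` antitone, so
`Y_x = ⋂ₙ ⋃_{t ≥ 0} {A : ‖T_A(t)x‖ < 1/(n+1)}`, a countable intersection of open sets; and since
the operators `T_A(t)` are uniformly bounded, stability may be tested on a dense sequence,
so `Y = ⋂ₖ Y_{x_k}`. -/

open Filter Topology

/-- `T` is (strongly) stable: every orbit tends to `0`. -/
def IsStable {H : Type*} [NormedAddCommGroup H] [InnerProductSpace ℂ H]
    (T : ℝ → H →L[ℂ] H) : Prop :=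
  ∀ x : H, Tendsto (fun t : ℝ => ‖T t x‖) atTop (𝓝 0)

open Set

section Orbits

variable {𝕜 E : Type*} [NontriviallyNormedField 𝕜] [NormedAddCommGroup E] [NormedSpace 𝕜 E]

theorem antitoneOn_norm_apply_of_contraction (T : ℝ → E →L[𝕜] E)
    (hadd : ∀ s t : ℝ, 0 ≤ s → 0 ≤ t → T (s + t) = T s ∘L T t)
    (hle : ∀ t : ℝ, 0 ≤ t → ‖T t‖ ≤ 1) (x : E) :
    AntitoneOn (fun t => ‖T t x‖) (Ici 0) := by
  intro s hs t ht hst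
  have hsplit : T t = T (t - s) ∘L T s := by
    rw [← hadd _ _ (sub_nonneg.2 hst) hs, sub_add_cancel]
  calc ‖T t x‖ = ‖T (t - s) (T s x)‖ := by rw [hsplit]; rfl
    _ ≤ 1 * ‖T s x‖ := (T (t - s)).le_of_opNorm_le (hle _ (sub_nonneg.2 hst)) _
    _ = ‖T s x‖ := one_mul _

theorem isClosed_setOf_tendsto_norm_apply_zero (T : ℝ → E →L[𝕜] E) {C : ℝ}
    (hC : ∀ t : ℝ, 0 ≤ t → ‖T t‖ ≤ C) :
    IsClosed {x : E | Tendsto (fun t => ‖T t x‖) atTop (𝓝 0)} := by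
  have hequi : Equicontinuous fun t : Ici (0 : ℝ) => (T t : E → E) := by
    have := (NormedSpace.equicontinuous_TFAE fun t : Ici (0 : ℝ) => T t).out 5 1
    exact this.1 ⟨C, fun t => hC t t.2⟩
  simp_rw [← tendsto_zero_iff_norm_tendsto_zero, ← tendsto_comp_val_Ici_atTop (a := (0 : ℝ))]
  exact hequi.isClosed_setOfPred_tendsto continuous_const

end Orbits

theorem tendsto_zero_iff_forall_exists_lt_of_antitoneOn {f : ℝ → ℝ}
    (hf : AntitoneOn f (Ici 0)) (hnonneg : ∀ t, 0 ≤ f t) :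
    Tendsto f atTop (𝓝 0) ↔ ∀ n : ℕ, ∃ t ≥ 0, f t < 1 / (n + 1) := by
  refine ⟨fun h n => ?_, fun h => ?_⟩
  · exact ((h.eventually (gt_mem_nhds Nat.one_div_pos_of_nat)).and
      (eventually_ge_atTop 0)).exists.imp fun t ht => ⟨ht.2, ht.1⟩
  · refine tendsto_order.2 ⟨fun a ha => .of_forall fun t => ha.trans_le (hnonneg t),
      fun ε hε => ?_⟩
    obtain ⟨n, hn⟩ := exists_nat_one_div_lt hε
    obtain ⟨t₀, ht₀, hlt⟩ := h n
    filter_upwards [eventually_ge_atTop t₀] with t ht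
    exact ((hf ht₀ (ht₀.trans ht) ht).trans_lt hlt).trans hn

theorem isGδ_setOf_tendsto_zero_of_antitoneOn {X : Type*} [TopologicalSpace X]
    (f : X → ℝ → ℝ) (hcont : ∀ t : ℝ, 0 ≤ t → Continuous fun A => f A t)
    (hanti : ∀ A, AntitoneOn (f A) (Ici 0)) (hnonneg : ∀ A t, 0 ≤ f A t) :
    IsGδ {A | Tendsto (f A) atTop (𝓝 0)} := by
  have hset : {A | Tendsto (f A) atTop (𝓝 0)} =
      ⋂ n : ℕ, ⋃ t ≥ (0 : ℝ), {A | f A t < 1 / (n + 1)} := by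
    ext A
    simp only [mem_ofPred_eq, mem_iInter, mem_iUnion, exists_prop,
      tendsto_zero_iff_forall_exists_lt_of_antitoneOn (hanti A) (hnonneg A)]
  rw [hset]
  exact .iInter fun n => IsOpen.isGδ <| isOpen_biUnion fun t ht =>
    isOpen_lt (hcont t ht) continuous_const

section Stability

variable {H : Type*} [NormedAddCommGroup H] [InnerProductSpace ℂ H]

theorem IsExpStable.isStable {T : ℝ → H →L[ℂ] H} (hT : IsExpStable T) : IsStable T := by
  obtain ⟨C, -, a, ha, hbound⟩ := hT
  intro x
  have hdecay : Tendsto (fun t : ℝ => C * Real.exp (-(t * a)) * ‖x‖) atTop (𝓝 0) := by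
    simpa using ((Real.tendsto_exp_atBot.comp
      (tendsto_neg_atTop_atBot.comp (tendsto_id.atTop_mul_const ha))).const_mul C).mul_const ‖x‖
  refine squeeze_zero' (.of_forall fun t => norm_nonneg _) ?_ hdecay
  filter_upwards [eventually_ge_atTop 0] with t ht
  exact (T t).le_of_opNorm_le (hbound t ht) x

theorem isStable_iff_of_denseRange {T : ℝ → H →L[ℂ] H} {C : ℝ}
    (hC : ∀ t : ℝ, 0 ≤ t → ‖T t‖ ≤ C) {u : ℕ → H} (hu : DenseRange u) :
    IsStable T ↔ ∀ k, Tendsto (fun t => ‖T t (u k)‖) atTop (𝓝 0) :=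
  ⟨fun h k => h (u k), fun h x =>
    hu.induction_on x (isClosed_setOf_tendsto_norm_apply_zero T hC) h⟩

end Stability

theorem stable_dense_Gδ_general
    {X : Type*} [MetricSpace X]
    {H : Type*} [NormedAddCommGroup H] [InnerProductSpace ℂ H]
    [TopologicalSpace.SeparableSpace H]
    (T : X → ℝ → H →L[ℂ] H)
    (hsem : ∀ A : X, IsContractionC0Semigroup (T A))
    (hcont : ∀ t : ℝ, 0 ≤ t → ∀ y : H, Continuous fun A : X => T A t y)
    (hdense : Dense {A : X | IsExpStable (T A)}) :
    IsGδ {A : X | IsStable (T A)} ∧ Dense {A : X | IsStable (T A)} := by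
  obtain ⟨u, hu⟩ := TopologicalSpace.exists_dense_seq H
  have hY : {A : X | IsStable (T A)} =
      ⋂ k, {A | Tendsto (fun t => ‖T A t (u k)‖) atTop (𝓝 0)} := by
    ext A
    simp only [mem_ofPred_eq, mem_iInter, isStable_iff_of_denseRange (hsem A).2.2.1 hu]
  refine ⟨hY ▸ .iInter fun k => isGδ_setOf_tendsto_zero_of_antitoneOn _
      (fun t ht => (hcont t ht (u k)).norm)
      (fun A => antitoneOn_norm_apply_of_contraction _ (hsem A).2.1 (hsem A).2.2.1 (u k))
      (fun _ _ => norm_nonneg _),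
    hdense.mono fun _ => IsExpStable.isStable⟩

/-- for a family of contraction `C₀`-semigroups on a separable complex
Hilbert space, depending strongly continuously on a parameter ranging in a nonempty
complete metric space `X`, if the exponentially stable parameters are dense in `X`
then the set of parameters whose semigroup is (strongly) stable is a dense `G_δ`
subset of `X`. -/
theorem stable_dense_Gδ
    {X : Type*} [MetricSpace X] [CompleteSpace X] [Nonempty X]
    {H : Type*} [NormedAddCommGroup H] [InnerProductSpace ℂ H] [CompleteSpace H]
    [TopologicalSpace.SeparableSpace H]
    (T : X → ℝ → H →L[ℂ] H)
    (hsem : ∀ A : X, IsContractionC0Semigroup (T A))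
    (hcont : ∀ t : ℝ, 0 ≤ t → ∀ y : H, Continuous fun A : X => T A t y)
    (hdense : Dense {A : X | IsExpStable (T A)}) :
    IsGδ {A : X | IsStable (T A)} ∧ Dense {A : X | IsStable (T A)} :=
  stable_dense_Gδ_general T hsem hcont hdense
end

section
/- Let X be a nonempty complete metric space, H a separable complex Hilbert space, and for each A ∈ X let (T_A(t))_{t≥0} be a C₀-semigroup of contractions on H such that for every t ≥ 0 and x ∈ H the map X ∋ A ↦ T_A(t)x ∈ H is continuous. Suppose that both {A ∈ X : (T_A(t))_{t≥0} is exponentially stable} and {A ∈ X : (T_A(t))_{t≥0} is not exponentially stable} are dense in X. Then {A ∈ X : (T_A(t))_{t≥0} is stable but not exponentially stable} is a dense G_δ subset of X. -/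
open Filter Topology

section helpers

variable {H : Type*} [NormedAddCommGroup H] [InnerProductSpace ℂ H]

lemma contraction_norm_le {T : ℝ → H →L[ℂ] H} (hT : IsContractionC0Semigroup T)
    {t : ℝ} (ht : 0 ≤ t) (x : H) : ‖T t x‖ ≤ ‖x‖ := by
  calc ‖T t x‖ ≤ ‖T t‖ * ‖x‖ := (T t).le_opNorm x
  _ ≤ 1 * ‖x‖ := by
      have := hT.2.2.1 t ht
      exact mul_le_mul_of_nonneg_right this (norm_nonneg x)
  _ = ‖x‖ := one_mul _

lemma orbit_antitone {T : ℝ → H →L[ℂ] H} (hT : IsContractionC0Semigroup T)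
    (x : H) {s t : ℝ} (hs : 0 ≤ s) (hst : s ≤ t) : ‖T t x‖ ≤ ‖T s x‖ := by
  have h1 : 0 ≤ t - s := by linarith
  have h2 : T t = T (t - s) ∘L T s := by
    have := hT.2.1 (t - s) s h1 hs
    rwa [sub_add_cancel] at this
  rw [h2]
  exact contraction_norm_le hT h1 (T s x)

lemma expStable_iff {T : ℝ → H →L[ℂ] H} (hT : IsContractionC0Semigroup T) :
    IsExpStable T ↔ ∃ n k : ℕ, ‖T ((n : ℝ) + 1)‖ ≤ 1 - 1 / ((k : ℝ) + 2) := by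
  constructor
  · rintro ⟨C, hC, a, ha, hb⟩
    have h1 : Tendsto (fun n : ℕ => C * Real.exp (-(((n : ℝ) + 1) * a))) atTop (𝓝 0) := by
      have h2 : Tendsto (fun n : ℕ => -(((n : ℝ) + 1) * a)) atTop atBot := by
        apply Filter.tendsto_neg_atBot_iff.mpr
        apply Filter.Tendsto.atTop_mul_const ha
        exact tendsto_atTop_add_const_right _ 1 tendsto_natCast_atTop_atTop
      have := (Real.tendsto_exp_atBot.comp h2).const_mul C
      simpa using this
    have h3 : ∀ᶠ n : ℕ in atTop, C * Real.exp (-(((n : ℝ) + 1) * a)) < 1/2 :=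
      h1.eventually_lt_const (by norm_num)
    obtain ⟨n, hn⟩ := h3.exists
    refine ⟨n, 0, ?_⟩
    have := hb ((n : ℝ) + 1) (by positivity)
    push_cast
    norm_num
    linarith
  · rintro ⟨n, k, hnk⟩
    set m : ℝ := (n : ℝ) + 1 with hm
    set q : ℝ := 1 - 1 / ((k : ℝ) + 2) with hq
    have hm0 : 0 < m := by positivity
    have hq0 : (0:ℝ) < q := by
      rw [hq]
      have : 1 / ((k : ℝ) + 2) ≤ 1/2 := by
        apply div_le_div_of_nonneg_left <;> norm_num
      linarith
    have hq1 : q < 1 := by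
      rw [hq]; have : 0 < 1 / ((k : ℝ) + 2) := by positivity
      linarith
    have key : ∀ j : ℕ, ‖T ((j : ℝ) * m)‖ ≤ q ^ j := by
      intro j
      induction j with
      | zero => simp [hT.1]; exact (ContinuousLinearMap.norm_id_le : ‖(1 : H →L[ℂ] H)‖ ≤ 1)
      | succ j ih =>
        have he : ((j : ℝ) + 1) * m = m + (j : ℝ) * m := by ring
        have h2 := hT.2.1 m ((j : ℝ) * m) hm0.le (by positivity)
        push_cast
        rw [he, h2]
        calc ‖T m ∘L T ((j:ℝ) * m)‖ ≤ ‖T m‖ * ‖T ((j:ℝ)*m)‖ := ContinuousLinearMap.opNorm_comp_le _ _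
        _ ≤ q * q ^ j := by
            apply mul_le_mul hnk ih (norm_nonneg _) hq0.le
        _ = q ^ (j+1) := by ring
    have hlq : Real.log q < 0 := Real.log_neg hq0 hq1
    refine ⟨1/q, by positivity, -Real.log q / m, div_pos (neg_pos.mpr hlq) hm0, ?_⟩
    intro t ht
    set j : ℕ := ⌊t / m⌋₊ with hj
    have hjle : (j : ℝ) * m ≤ t := by
      rw [hj]
      have := Nat.floor_le (by positivity : 0 ≤ t / m)
      calc ((⌊t/m⌋₊ : ℝ)) * m ≤ (t/m) * m := by nlinarith
      _ = t := by field_simp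
    have hjlt : t < ((j : ℝ) + 1) * m := by
      have := Nat.lt_floor_add_one (t / m)
      calc t = (t/m) * m := by field_simp
      _ < ((j:ℝ)+1) * m := by nlinarith
    have hnorm : ‖T t‖ ≤ q ^ j := by
      have hr0 : 0 ≤ t - (j:ℝ)*m := by linarith
      have h2 := hT.2.1 (t - (j:ℝ)*m) ((j:ℝ)*m) hr0 (by positivity)
      rw [sub_add_cancel] at h2
      calc ‖T t‖ ≤ ‖T (t - (j:ℝ)*m)‖ * ‖T ((j:ℝ)*m)‖ := by
            rw [h2]; exact ContinuousLinearMap.opNorm_comp_le _ _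
      _ ≤ 1 * ‖T ((j:ℝ)*m)‖ :=
            mul_le_mul_of_nonneg_right (hT.2.2.1 _ hr0) (norm_nonneg _)
      _ = ‖T ((j:ℝ)*m)‖ := one_mul _
      _ ≤ q ^ j := key j
    -- now q ^ j ≤ (1/q) * exp (-(t * (-log q / m)))
    have hqj : q ^ j = Real.exp ((j : ℝ) * Real.log q) := by
      rw [← Real.log_rpow hq0, Real.exp_log (by positivity), Real.rpow_natCast]
    have hjge : t / m - 1 ≤ (j : ℝ) := by
      have := hjlt
      rw [div_sub' hm0.ne', div_le_iff₀ hm0]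
      nlinarith
    have hmono : (j : ℝ) * Real.log q ≤ (t / m - 1) * Real.log q :=
      mul_le_mul_of_nonpos_right hjge hlq.le
    calc ‖T t‖ ≤ q ^ j := hnorm
    _ = Real.exp ((j : ℝ) * Real.log q) := hqj
    _ ≤ Real.exp ((t / m - 1) * Real.log q) := Real.exp_le_exp.mpr hmono
    _ = 1/q * Real.exp (-(t * (-Real.log q / m))) := by
        have he : -(t * (-Real.log q / m)) = t / m * Real.log q := by
          field_simp
        rw [he, show (t / m - 1) * Real.log q = -Real.log q + t / m * Real.log q by ring,
          Real.exp_add, Real.exp_neg, Real.exp_log hq0, one_div]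

lemma expStable_stable {T : ℝ → H →L[ℂ] H} (hT : IsContractionC0Semigroup T) :
    IsExpStable T → IsStable T := by
  rintro ⟨C, hC, a, ha, hb⟩ x
  have hg : Tendsto (fun t : ℝ => C * Real.exp (-(t * a)) * ‖x‖) atTop (𝓝 0) := by
    have h2 : Tendsto (fun t : ℝ => -(t * a)) atTop atBot :=
      Filter.tendsto_neg_atBot_iff.mpr (Filter.Tendsto.atTop_mul_const ha tendsto_id)
    have := ((Real.tendsto_exp_atBot.comp h2).const_mul C).mul_const ‖x‖
    simpa using this
  apply squeeze_zero' (Filter.Eventually.of_forall fun t => norm_nonneg _) ?_ hg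
  filter_upwards [eventually_ge_atTop (0:ℝ)] with t ht
  calc ‖T t x‖ ≤ ‖T t‖ * ‖x‖ := (T t).le_opNorm x
  _ ≤ C * Real.exp (-(t * a)) * ‖x‖ :=
      mul_le_mul_of_nonneg_right (hb t ht) (norm_nonneg x)

end helpers

/-- abstract category principle: for a family of contraction
`C₀`-semigroups on a separable complex Hilbert space depending strongly
continuously on a parameter ranging in a nonempty complete metric space `X`, if
both the exponentially stable and the non-exponentially-stable parameters are
dense in `X`, then the set of parameters whose semigroup is stable but not
exponentially stable is a dense `G_δ` subset of `X`. -/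
theorem stable_not_expStable_dense_Gδ
    {X : Type*} [MetricSpace X] [CompleteSpace X] [Nonempty X]
    {H : Type*} [NormedAddCommGroup H] [InnerProductSpace ℂ H] [CompleteSpace H]
    [TopologicalSpace.SeparableSpace H]
    (T : X → ℝ → H →L[ℂ] H)
    (hsem : ∀ A : X, IsContractionC0Semigroup (T A))
    (hcont : ∀ t : ℝ, 0 ≤ t → ∀ y : H, Continuous fun A : X => T A t y)
    (hdense₁ : Dense {A : X | IsExpStable (T A)})
    (hdense₂ : Dense {A : X | ¬ IsExpStable (T A)}) :
    IsGδ {A : X | IsStable (T A) ∧ ¬ IsExpStable (T A)} ∧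
    Dense {A : X | IsStable (T A) ∧ ¬ IsExpStable (T A)} := by
  obtain ⟨D, hDc, hDd⟩ := TopologicalSpace.exists_countable_dense H
  -- the stable set is a dense Gδ
  have hSeq : {A : X | IsStable (T A)} =
      ⋂ y ∈ D, ⋂ n : ℕ, {A : X | ∃ t, 0 ≤ t ∧ ‖T A t y‖ < 1/((n:ℝ)+1)} := by
    ext A
    simp only [Set.mem_setOf_eq, Set.mem_iInter]
    constructor
    · intro hst y _ n
      have h1 : (0:ℝ) < 1/((n:ℝ)+1) := by positivity
      obtain ⟨t, ht⟩ := (((hst y).eventually_lt_const h1).and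
        (eventually_ge_atTop (0:ℝ))).exists
      exact ⟨t, ht.2, ht.1⟩
    · intro h x
      rw [Metric.tendsto_atTop]
      intro ε hε
      obtain ⟨y, hyD, hxy⟩ := Metric.mem_closure_iff.mp (hDd x) (ε/2) (by linarith)
      obtain ⟨n, hn⟩ := exists_nat_one_div_lt (show (0:ℝ) < ε/2 by linarith)
      obtain ⟨t₀, ht₀, ht₀'⟩ := h y hyD n
      refine ⟨t₀, fun t htt₀ => ?_⟩
      have h1 : ‖T A t x‖ ≤ ‖T A t₀ x‖ := orbit_antitone (hsem A) x ht₀ htt₀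
      have h2 : ‖T A t₀ x‖ ≤ ‖T A t₀ y‖ + ‖x - y‖ := by
        calc ‖T A t₀ x‖ = ‖T A t₀ y + (T A t₀ x - T A t₀ y)‖ := by rw [add_sub_cancel]
        _ ≤ ‖T A t₀ y‖ + ‖T A t₀ x - T A t₀ y‖ := norm_add_le _ _
        _ = ‖T A t₀ y‖ + ‖T A t₀ (x - y)‖ := by rw [map_sub]
        _ ≤ ‖T A t₀ y‖ + ‖x - y‖ := by
            have := contraction_norm_le (hsem A) ht₀ (x - y)
            linarith
      have h3 : ‖x - y‖ = dist x y := (dist_eq_norm x y).symm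
      have h4 : dist ‖T A t x‖ 0 = ‖T A t x‖ := by
        rw [Real.dist_eq, sub_zero, abs_of_nonneg (norm_nonneg _)]
      rw [h4]
      calc ‖T A t x‖ ≤ ‖T A t₀ y‖ + ‖x - y‖ := le_trans h1 h2
      _ < 1/((n:ℝ)+1) + ε/2 := by rw [h3]; exact add_lt_add ht₀' hxy
      _ < ε/2 + ε/2 := by linarith
      _ = ε := by ring
  have hGδ1 : IsGδ {A : X | IsStable (T A)} := by
    rw [hSeq]
    refine IsGδ.biInter hDc fun y _ => IsGδ.iInter fun n => IsOpen.isGδ ?_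
    have heq : {A : X | ∃ t, 0 ≤ t ∧ ‖T A t y‖ < 1/((n:ℝ)+1)} =
        ⋃ t ∈ Set.Ici (0:ℝ), {A : X | ‖T A t y‖ < 1/((n:ℝ)+1)} := by
      ext A
      simp [Set.mem_Ici]
    rw [heq]
    exact isOpen_biUnion fun t ht =>
      isOpen_lt (continuous_norm.comp (hcont t ht y)) continuous_const
  -- the non-exponentially-stable set is a Gδ
  have hNeq : {A : X | ¬ IsExpStable (T A)} =
      ⋂ n : ℕ, ⋂ k : ℕ, {A : X | ‖T A ((n:ℝ)+1)‖ ≤ 1 - 1/((k:ℝ)+2)}ᶜ := by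
    ext A
    simp only [Set.mem_setOf_eq, Set.mem_iInter, Set.mem_compl_iff,
      expStable_iff (hsem A)]
    push_neg
    rfl
  have hclosed : ∀ n k : ℕ, IsClosed {A : X | ‖T A ((n:ℝ)+1)‖ ≤ 1 - 1/((k:ℝ)+2)} := by
    intro n k
    have hq : (0:ℝ) ≤ 1 - 1/((k:ℝ)+2) := by
      have h2 : (1:ℝ)/((k:ℝ)+2) ≤ 1/2 := by
        apply div_le_div_of_nonneg_left <;> norm_num
      linarith
    have heq : {A : X | ‖T A ((n:ℝ)+1)‖ ≤ 1 - 1/((k:ℝ)+2)} =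
        ⋂ x : H, {A : X | ‖T A ((n:ℝ)+1) x‖ ≤ (1 - 1/((k:ℝ)+2)) * ‖x‖} := by
      ext A
      simp only [Set.mem_setOf_eq, Set.mem_iInter]
      exact ContinuousLinearMap.opNorm_le_iff hq
    rw [heq]
    exact isClosed_iInter fun x =>
      isClosed_le (continuous_norm.comp (hcont _ (by positivity) x)) continuous_const
  have hGδ2 : IsGδ {A : X | ¬ IsExpStable (T A)} := by
    rw [hNeq]
    exact IsGδ.iInter fun n => IsGδ.iInter fun k => ((hclosed n k).isOpen_compl).isGδ
  have hd1 : Dense {A : X | IsStable (T A)} :=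
    hdense₁.mono fun A hA => expStable_stable (hsem A) hA
  have h12 : {A : X | IsStable (T A) ∧ ¬ IsExpStable (T A)} =
      {A : X | IsStable (T A)} ∩ {A : X | ¬ IsExpStable (T A)} := rfl
  rw [h12]
  exact ⟨hGδ1.inter hGδ2, hd1.inter_of_Gδ hGδ1 hGδ2 hdense₂⟩
end

section
/- Let μ be a nonzero finite positive Borel measure on ℝ supported in (-∞,0]. Then liminf_{t→∞} ln(∫_ℝ e^{2tλ} dμ(λ)) / ln t = -d_μ^+(0), where the equality is understood in the extended reals (if d_μ^+(0) = ∞, then the liminf equals -∞). -/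
open Filter Topology MeasureTheory

/-- The pointwise upper scaling exponent of a Borel measure `μ` on `ℝ` at `0`:
`limsup_{ε → 0⁺} ln μ((-ε,ε)) / ln ε` if `μ((-ε,ε)) > 0` for all `ε > 0`, and
`∞` otherwise; valued in the extended reals. -/
noncomputable def upperScalingExponentAtZero (μ : Measure ℝ) : EReal :=
  open scoped Classical in
  if ∀ ε : ℝ, 0 < ε → 0 < μ (Set.Ioo (-ε) ε) then
    Filter.limsup
      (fun ε : ℝ => ((Real.log (μ (Set.Ioo (-ε) ε)).toReal / Real.log ε : ℝ) : EReal))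
      (nhdsWithin 0 (Set.Ioi 0))
  else ⊤


section helpers
set_option linter.unusedSectionVars false

lemma tendsto_aff_div_log {a b : ℝ} (ha : 0 < a) :
    Tendsto (fun t : ℝ => (b - a * t) / Real.log t) atTop atBot := by
  have hF : Tendsto (fun u : ℝ => b / u + -a * (Real.exp u / u)) atTop atBot := by
    apply Filter.Tendsto.add_atBot (tendsto_const_nhds.div_atTop tendsto_id)
    exact (tendsto_const_mul_atBot_of_neg (neg_lt_zero.mpr ha)).mpr
      (by simpa using Real.tendsto_exp_div_pow_atTop 1)
  have hcomp := hF.comp Real.tendsto_log_atTop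
  apply hcomp.congr'
  filter_upwards [eventually_gt_atTop (0:ℝ)] with t ht
  simp only [Function.comp_apply, Real.exp_log ht]
  ring

lemma tendsto_ax_add_blog {a z : ℝ} (h : 0 < a + z) :
    Tendsto (fun s : ℝ => (a + z) * s + z * Real.log s) atTop atTop := by
  have hc : 0 < (a + z) / (2 * (|z| + 1)) := by positivity
  have hev := Asymptotics.isLittleO_iff.mp Real.isLittleO_log_id_atTop hc
  apply tendsto_atTop_mono' atTop ?_ (tendsto_id.const_mul_atTop (show 0 < (a + z) / 2 by linarith))
  filter_upwards [hev, eventually_ge_atTop (0:ℝ)] with s hs hs0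
  have h1 : |Real.log s| ≤ (a + z) / (2 * (|z| + 1)) * s := by
    simpa [Real.norm_eq_abs, abs_of_nonneg hs0] using hs
  have h2 : |z * Real.log s| ≤ |z| * ((a + z) / (2 * (|z| + 1)) * s) := by
    rw [abs_mul]; exact mul_le_mul_of_nonneg_left h1 (abs_nonneg z)
  have h3 : |z| * ((a + z) / (2 * (|z| + 1)) * s) ≤ (a + z) / 2 * s := by
    have h9 : (a + z) / 2 = (a + z) / (2 * (|z| + 1)) * (|z| + 1) := by
      field_simp
    rw [h9]
    nlinarith [mul_nonneg hc.le hs0, abs_nonneg z]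
  have h4 := neg_abs_le (z * Real.log s)
  simp only [id_eq]
  nlinarith

variable {μ : Measure ℝ} [IsFiniteMeasure μ]

lemma aux_ae (hsupp : μ (Set.Ioi 0) = 0) : ∀ᵐ l ∂μ, l ≤ 0 := by
  rw [MeasureTheory.ae_iff]; convert hsupp using 2; ext l; simp

lemma aux_integrable (hsupp : μ (Set.Ioi 0) = 0) {t : ℝ} (ht : 0 ≤ t) :
    Integrable (fun l => Real.exp (2 * t * l)) μ := by
  refine Integrable.mono' (integrable_const 1) ?_ ?_
  · exact (Real.continuous_exp.comp (continuous_const.mul continuous_id)).aestronglyMeasurable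
  · filter_upwards [aux_ae hsupp] with l hl
    rw [Real.norm_eq_abs, abs_of_pos (Real.exp_pos _)]
    exact Real.exp_le_one_iff.mpr (by nlinarith)

lemma aux_pos (hμ : μ ≠ 0) (hsupp : μ (Set.Ioi 0) = 0) {t : ℝ} (ht : 0 ≤ t) :
    0 < ∫ l, Real.exp (2 * t * l) ∂μ := by
  rw [integral_pos_iff_support_of_nonneg (fun l => (Real.exp_pos _).le) (aux_integrable hsupp ht)]
  have : Function.support (fun l : ℝ => Real.exp (2 * t * l)) = Set.univ := by
    ext l; simp [Function.mem_support, (Real.exp_pos _).ne']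
  rw [this]
  simpa [pos_iff_ne_zero] using hμ

lemma aux_lower (hsupp : μ (Set.Ioi 0) = 0) {t ε : ℝ} (ht : 0 ≤ t) (hε : 0 < ε) :
    Real.exp (-(2 * t * ε)) * (μ (Set.Ioo (-ε) ε)).toReal ≤ ∫ l, Real.exp (2 * t * l) ∂μ := by
  have hIoo : μ (Set.Ioo (-ε) ε) = μ (Set.Ioc (-ε) 0) := by
    apply le_antisymm
    · calc μ (Set.Ioo (-ε) ε) ≤ μ (Set.Ioc (-ε) 0 ∪ Set.Ioi 0) := by
            apply measure_mono; intro x hx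
            rcases le_or_gt x 0 with h | h
            · exact Or.inl ⟨hx.1, h⟩
            · exact Or.inr h
        _ ≤ μ (Set.Ioc (-ε) 0) + μ (Set.Ioi 0) := measure_union_le _ _
        _ = μ (Set.Ioc (-ε) 0) := by rw [hsupp, add_zero]
    · apply measure_mono; intro x hx; exact ⟨hx.1, lt_of_le_of_lt hx.2 hε⟩
  rw [hIoo]
  calc Real.exp (-(2 * t * ε)) * (μ (Set.Ioc (-ε) 0)).toReal
      ≤ ∫ l in Set.Ioc (-ε) 0, Real.exp (2 * t * l) ∂μ := by
        apply setIntegral_ge_of_const_le_real measurableSet_Ioc (measure_ne_top μ _)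
        · intro x hx
          apply Real.exp_le_exp.mpr
          nlinarith [hx.1, hx.2]
        · exact (aux_integrable hsupp ht).integrableOn
    _ ≤ ∫ l, Real.exp (2 * t * l) ∂μ :=
        setIntegral_le_integral (aux_integrable hsupp ht)
          (Filter.Eventually.of_forall fun l => (Real.exp_pos _).le)

lemma aux_upper (hsupp : μ (Set.Ioi 0) = 0) {t ε : ℝ} (ht : 0 ≤ t) (hε : 0 < ε) :
    ∫ l, Real.exp (2 * t * l) ∂μ ≤
      Real.exp (-(2 * t * ε)) * (μ Set.univ).toReal + (μ (Set.Ioo (-ε) ε)).toReal := by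
  have hint := aux_integrable (μ := μ) hsupp ht
  have hsplit : (∫ l in Set.Iic (-ε), Real.exp (2 * t * l) ∂μ) +
      (∫ l in Set.Ioi (-ε), Real.exp (2 * t * l) ∂μ) = ∫ l, Real.exp (2 * t * l) ∂μ := by
    have := integral_add_compl (measurableSet_Iic (a := -ε)) hint
    rwa [Set.compl_Iic] at this
  rw [← hsplit]
  have h1 : (∫ l in Set.Iic (-ε), Real.exp (2 * t * l) ∂μ) ≤
      Real.exp (-(2 * t * ε)) * (μ Set.univ).toReal := by
    calc (∫ l in Set.Iic (-ε), Real.exp (2 * t * l) ∂μ)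
        ≤ ∫ _ in Set.Iic (-ε), Real.exp (-(2 * t * ε)) ∂μ := by
          apply setIntegral_mono_on hint.integrableOn
            (integrableOn_const (measure_ne_top μ _)) measurableSet_Iic
          intro x hx
          apply Real.exp_le_exp.mpr
          have : x ≤ -ε := hx
          nlinarith
      _ = (μ (Set.Iic (-ε))).toReal * Real.exp (-(2 * t * ε)) := by
          rw [setIntegral_const]; simp [smul_eq_mul, Measure.real]
      _ ≤ Real.exp (-(2 * t * ε)) * (μ Set.univ).toReal := by
          rw [mul_comm]
          apply mul_le_mul_of_nonneg_left _ (Real.exp_pos _).le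
          exact ENNReal.toReal_mono (measure_ne_top μ _) (measure_mono (Set.subset_univ _))
  have h2 : (∫ l in Set.Ioi (-ε), Real.exp (2 * t * l) ∂μ) ≤ (μ (Set.Ioo (-ε) ε)).toReal := by
    have hunion : Set.Ioi (-ε) = Set.Ioc (-ε) 0 ∪ Set.Ioi (0:ℝ) := by
      ext x; simp only [Set.mem_Ioi, Set.mem_union, Set.mem_Ioc]
      constructor
      · intro hx; rcases le_or_gt x 0 with h | h
        · exact Or.inl ⟨hx, h⟩
        · exact Or.inr h
      · rintro (⟨h1, _⟩ | h1)
        · exact h1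
        · linarith
    rw [hunion, setIntegral_union (by rw [Set.disjoint_left]; rintro a ⟨_, h1⟩ h2; exact absurd h2 (not_lt.mpr h1))
      measurableSet_Ioi hint.integrableOn hint.integrableOn]
    have hz : (∫ l in Set.Ioi (0:ℝ), Real.exp (2 * t * l) ∂μ) = 0 := by
      rw [Measure.restrict_eq_zero.mpr hsupp, integral_zero_measure]
    rw [hz, add_zero]
    calc (∫ l in Set.Ioc (-ε) 0, Real.exp (2 * t * l) ∂μ)
        ≤ ∫ _ in Set.Ioc (-ε) 0, (1:ℝ) ∂μ := by
          apply setIntegral_mono_on hint.integrableOn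
            (integrableOn_const (measure_ne_top μ _)) measurableSet_Ioc
          intro x hx
          exact Real.exp_le_one_iff.mpr (by nlinarith [hx.2])
      _ = (μ (Set.Ioc (-ε) 0)).toReal := by rw [setIntegral_const]; simp [Measure.real]
      _ ≤ (μ (Set.Ioo (-ε) ε)).toReal := by
          apply ENNReal.toReal_mono (measure_ne_top μ _)
          apply measure_mono
          intro x hx; exact ⟨hx.1, lt_of_le_of_lt hx.2 hε⟩
  linarith

end helpers

theorem liminf_log_laplace_eq_neg_upperScalingExponent'
    (μ : Measure ℝ) [IsFiniteMeasure μ] (hμ : μ ≠ 0)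
    (hsupp : μ (Set.Ioi 0) = 0) :
    Filter.liminf
        (fun t : ℝ =>
          ((Real.log (∫ l : ℝ, Real.exp (2 * t * l) ∂μ) / Real.log t : ℝ) : EReal))
        atTop
      = - (open scoped Classical in
          if ∀ ε : ℝ, 0 < ε → 0 < μ (Set.Ioo (-ε) ε) then
            Filter.limsup
              (fun ε : ℝ => ((Real.log (μ (Set.Ioo (-ε) ε)).toReal / Real.log ε : ℝ) : EReal))
              (nhdsWithin 0 (Set.Ioi 0))
          else ⊤) := by
  classical
  have hM : 0 < (μ Set.univ).toReal :=
    ENNReal.toReal_pos (Measure.measure_univ_pos.mpr hμ).ne' (measure_ne_top μ _)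
  by_cases hpos : ∀ ε : ℝ, 0 < ε → 0 < μ (Set.Ioo (-ε) ε)
  · rw [if_pos hpos]
    set D := Filter.limsup
        (fun ε : ℝ => ((Real.log (μ (Set.Ioo (-ε) ε)).toReal / Real.log ε : ℝ) : EReal))
        (nhdsWithin 0 (Set.Ioi 0)) with hD
    apply le_antisymm
    · -- liminf ≤ -D
      refine EReal.le_of_forall_lt_iff_le.mp (fun z hz => ?_)
      have hz' : (((-z : ℝ)) : EReal) < D := by
        rw [EReal.coe_neg]; exact EReal.neg_lt_of_neg_lt hz
      obtain ⟨a, ha1, ha2⟩ := EReal.exists_between_coe_real hz'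
      have haz : -z < a := EReal.coe_lt_coe_iff.mp ha1
      have hfreq := frequently_lt_of_lt_limsup (h := ha2)
      set M := (μ Set.univ).toReal with hMdef
      set C := Real.log (M + 1) with hCdef
      set K := max a 1 with hKdef
      have hK1 : (1:ℝ) ≤ K := le_max_right _ _
      have hT1 := tendsto_ax_add_blog (show 0 < a + z by linarith)
      obtain ⟨s₀, hs₀⟩ := eventually_atTop.mp
        (hT1.eventually_ge_atTop (C - z * Real.log K))
      apply liminf_le_of_frequently_le'
      rw [frequently_atTop]
      intro T
      set δ := min (Real.exp (-(max s₀ 1))) (max T 1)⁻¹ with hδdef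
      have hδ : 0 < δ := lt_min (Real.exp_pos _) (by positivity)
      have hevδ : ∀ᶠ ε in 𝓝[>](0:ℝ), ε < δ :=
        eventually_nhdsWithin_of_eventually_nhds (eventually_lt_nhds hδ)
      obtain ⟨ε, hfε, hεδ, hε0'⟩ :=
        (hfreq.and_eventually (hevδ.and self_mem_nhdsWithin)).exists
      have hε0 : 0 < ε := hε0'
      have hεe : ε < Real.exp (-(max s₀ 1)) := lt_of_lt_of_le hεδ (min_le_left _ _)
      have hε1 : ε < 1 := by
        refine hεe.trans (Real.exp_lt_one_iff.mpr ?_)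
        have := le_max_right s₀ 1
        linarith
      have hlogε : Real.log ε < 0 := Real.log_neg hε0 hε1
      set s := -Real.log ε with hsdef
      have hslog : Real.log ε < -(max s₀ 1) := by
        have := Real.log_lt_log hε0 hεe
        rwa [Real.log_exp] at this
      have hs1 : (1:ℝ) ≤ s := by
        have := le_max_right s₀ 1; simp only [hsdef]; linarith
      have hss₀ : s₀ ≤ s := by
        have := le_max_left s₀ 1; simp only [hsdef]; linarith
      have hgpos : 0 < (μ (Set.Ioo (-ε) ε)).toReal :=
        ENNReal.toReal_pos (hpos ε hε0).ne' (measure_ne_top μ _)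
      have hga : (μ (Set.Ioo (-ε) ε)).toReal < ε ^ a := by
        have h1 : a < Real.log (μ (Set.Ioo (-ε) ε)).toReal / Real.log ε :=
          EReal.coe_lt_coe_iff.mp hfε
        have h2 : Real.log (μ (Set.Ioo (-ε) ε)).toReal < a * Real.log ε :=
          (lt_div_iff_of_neg hlogε).mp h1
        calc (μ (Set.Ioo (-ε) ε)).toReal
            = Real.exp (Real.log (μ (Set.Ioo (-ε) ε)).toReal) := (Real.exp_log hgpos).symm
          _ < Real.exp (Real.log ε * a) :=
              Real.exp_lt_exp.mpr (by linarith [mul_comm (Real.log ε) a])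
          _ = ε ^ a := (Real.rpow_def_of_pos hε0 a).symm
      set t := K * ε⁻¹ * s with htdef
      have hKpos : (0:ℝ) < K := by linarith
      have hεinv : 0 < ε⁻¹ := by positivity
      have ht0 : 0 < t := by positivity
      have htT : T ≤ t := by
        have h1 : ε < (max T 1)⁻¹ := lt_of_lt_of_le hεδ (min_le_right _ _)
        have h2 : max T 1 < ε⁻¹ := by
          have := (inv_lt_inv₀ (a := (max T 1)⁻¹) (by positivity) hε0).mpr h1
          rwa [inv_inv] at this
        have hKs : (1:ℝ) ≤ K * s := by nlinarith
        have h3 : ε⁻¹ ≤ t := by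
          rw [htdef]
          calc ε⁻¹ = ε⁻¹ * 1 := by ring
            _ ≤ ε⁻¹ * (K * s) := mul_le_mul_of_nonneg_left hKs hεinv.le
            _ = K * ε⁻¹ * s := by ring
        have := le_max_left T 1
        linarith
      have haux := aux_upper hsupp ht0.le hε0
      have h2tε : 2 * t * ε = 2 * K * s := by
        have hinv : ε⁻¹ * ε = 1 := inv_mul_cancel₀ hε0.ne'
        rw [htdef]; linear_combination (2 * K * s) * hinv
      have hexp : Real.exp (-(2 * t * ε)) ≤ ε ^ a := by
        rw [h2tε]
        have h5 : Real.exp (-(2 * K * s)) = ε ^ (2 * K) := by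
          rw [Real.rpow_def_of_pos hε0]
          congr 1
          simp only [hsdef]; ring
        rw [h5]
        apply Real.rpow_le_rpow_of_exponent_ge hε0 hε1.le
        have := le_max_left a 1
        linarith
      have hGt : (∫ l : ℝ, Real.exp (2 * t * l) ∂μ) ≤ ε ^ a * (M + 1) := by
        have h6 : Real.exp (-(2 * t * ε)) * M ≤ ε ^ a * M :=
          mul_le_mul_of_nonneg_right hexp hM.le
        calc (∫ l : ℝ, Real.exp (2 * t * l) ∂μ)
            ≤ Real.exp (-(2 * t * ε)) * M + (μ (Set.Ioo (-ε) ε)).toReal := haux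
          _ ≤ ε ^ a * M + ε ^ a := by linarith
          _ = ε ^ a * (M + 1) := by ring
      have hGpos := aux_pos hμ hsupp ht0.le
      have hrpow : (0:ℝ) < ε ^ a := Real.rpow_pos_of_pos hε0 a
      have hlogG : Real.log (∫ l : ℝ, Real.exp (2 * t * l) ∂μ) ≤ C - a * s := by
        have h7 := (Real.log_le_log_iff hGpos (by positivity)).mpr hGt
        rw [Real.log_mul hrpow.ne' (by linarith), Real.log_rpow hε0] at h7
        simp only [hsdef] at *
        linarith
      have hlogt : Real.log t = Real.log K + s + Real.log s := by
        rw [htdef, Real.log_mul (by positivity) (by linarith), Real.log_mul hKpos.ne' (by positivity),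
          Real.log_inv]
      have hlogK : 0 ≤ Real.log K := Real.log_nonneg hK1
      have hlogs : 0 ≤ Real.log s := Real.log_nonneg hs1
      have hlogt1 : (1:ℝ) ≤ Real.log t := by rw [hlogt]; linarith
      refine ⟨t, htT, ?_⟩
      apply EReal.coe_le_coe_iff.mpr
      rw [div_le_iff₀ (by linarith : (0:ℝ) < Real.log t)]
      have h8 := hs₀ s hss₀
      rw [hlogt]
      nlinarith
    · -- -D ≤ liminf
      refine EReal.ge_of_forall_gt_iff_ge.mp (fun z hz => ?_)
      have hz' : D < ((-z : ℝ) : EReal) := by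
        rw [EReal.coe_neg]; exact EReal.lt_neg_of_lt_neg hz
      obtain ⟨b, hb1, hb2⟩ := EReal.exists_between_coe_real hz'
      have hbz : b < -z := EReal.coe_lt_coe_iff.mp hb2
      have hev := eventually_lt_of_limsup_lt hb1
      have hev2 : ∀ᶠ ε in 𝓝[>](0:ℝ),
          ε ^ b < (μ (Set.Ioo (-ε) ε)).toReal ∧ 0 < ε ∧ ε < 1 := by
        filter_upwards [hev, self_mem_nhdsWithin,
          eventually_nhdsWithin_of_eventually_nhds (eventually_lt_nhds one_pos)] with ε h1 h2 h3
        have hε0 : 0 < ε := h2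
        have hgpos : 0 < (μ (Set.Ioo (-ε) ε)).toReal :=
          ENNReal.toReal_pos (hpos ε hε0).ne' (measure_ne_top μ _)
        have hlogε : Real.log ε < 0 := Real.log_neg hε0 h3
        have h4 : Real.log (μ (Set.Ioo (-ε) ε)).toReal / Real.log ε < b :=
          EReal.coe_lt_coe_iff.mp h1
        have h5 : b * Real.log ε < Real.log (μ (Set.Ioo (-ε) ε)).toReal :=
          (div_lt_iff_of_neg hlogε).mp h4
        refine ⟨?_, hε0, h3⟩
        calc ε ^ b = Real.exp (Real.log ε * b) := Real.rpow_def_of_pos hε0 b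
          _ < Real.exp (Real.log (μ (Set.Ioo (-ε) ε)).toReal) :=
              Real.exp_lt_exp.mpr (by linarith)
          _ = (μ (Set.Ioo (-ε) ε)).toReal := Real.exp_log hgpos
      have hev3 := tendsto_inv_atTop_nhdsGT_zero.eventually hev2
      have hzb : z + b < 0 := by linarith
      have hlog1 := Real.tendsto_log_atTop.eventually_ge_atTop (max 1 (-2 / (z + b)))
      apply le_liminf_of_le (by isBoundedDefault)
      filter_upwards [hev3, hlog1, eventually_gt_atTop (0:ℝ)] with t ht hlt ht0
      obtain ⟨htb, htinv, _⟩ := ht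
      have hlogt : (0:ℝ) < Real.log t := lt_of_lt_of_le one_pos (le_trans (le_max_left _ _) hlt)
      have hG := aux_lower hsupp ht0.le htinv
      rw [show 2 * t * t⁻¹ = 2 by field_simp] at hG
      have hlow : Real.exp (-2) * t⁻¹ ^ b ≤ ∫ l : ℝ, Real.exp (2 * t * l) ∂μ := by
        calc Real.exp (-2) * t⁻¹ ^ b
            ≤ Real.exp (-2) * (μ (Set.Ioo (-t⁻¹) t⁻¹)).toReal :=
              mul_le_mul_of_nonneg_left htb.le (Real.exp_pos _).le
          _ ≤ _ := hG
      have hGpos := aux_pos hμ hsupp ht0.le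
      have hlogG : -2 - b * Real.log t ≤ Real.log (∫ l : ℝ, Real.exp (2 * t * l) ∂μ) := by
        have h7 := (Real.log_le_log_iff (by positivity) hGpos).mpr hlow
        rw [Real.log_mul (Real.exp_pos _).ne' (Real.rpow_pos_of_pos htinv b).ne',
          Real.log_exp, Real.log_rpow htinv, Real.log_inv] at h7
        linarith
      apply EReal.coe_le_coe_iff.mpr
      rw [le_div_iff₀ hlogt]
      have h6 : -2 / (z + b) ≤ Real.log t := le_trans (le_max_right _ _) hlt
      have h7 : (z + b) * Real.log t ≤ (z + b) * (-2 / (z + b)) :=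
        mul_le_mul_of_nonpos_left h6 hzb.le
      have h8 : (z + b) * (-2 / (z + b)) = -2 := by
        rw [mul_comm]; exact div_mul_cancel₀ (-2) hzb.ne
      nlinarith
  · rw [if_neg hpos]
    push_neg at hpos
    obtain ⟨ε₀, hε₀, hμ0⟩ := hpos
    rw [nonpos_iff_eq_zero] at hμ0
    have hbot : Tendsto (fun t : ℝ =>
        Real.log (∫ l : ℝ, Real.exp (2 * t * l) ∂μ) / Real.log t) atTop atBot := by
      apply tendsto_atBot_mono' atTop ?_
        (tendsto_aff_div_log (b := Real.log (μ Set.univ).toReal)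
          (show (0:ℝ) < 2 * ε₀ by linarith))
      filter_upwards [eventually_gt_atTop (1:ℝ)] with t ht
      have ht0 : (0:ℝ) < t := by linarith
      have hlogt : 0 < Real.log t := Real.log_pos ht
      have hup := aux_upper hsupp ht0.le hε₀
      rw [hμ0] at hup
      simp only [ENNReal.toReal_zero, add_zero] at hup
      have hGpos := aux_pos hμ hsupp ht0.le
      have h1 : Real.log (∫ l : ℝ, Real.exp (2 * t * l) ∂μ) ≤
          Real.log (μ Set.univ).toReal - 2 * ε₀ * t := by
        have h2 := (Real.log_le_log_iff hGpos (by positivity)).mpr hup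
        rw [Real.log_mul (Real.exp_pos _).ne' hM.ne', Real.log_exp] at h2
        linarith
      exact (div_le_div_iff_of_pos_right hlogt).mpr h1
    have htend : Tendsto (fun t : ℝ =>
        ((Real.log (∫ l : ℝ, Real.exp (2 * t * l) ∂μ) / Real.log t : ℝ) : EReal))
        atTop (𝓝 ⊥) := by
      rw [EReal.tendsto_nhds_bot_iff_real]
      intro x
      filter_upwards [hbot.eventually (eventually_lt_atBot x)] with t htx
      exact_mod_cast EReal.coe_lt_coe_iff.mpr htx
    rw [htend.liminf_eq]
    simp

/-- liminf half of Proposition 1.5: if `μ` is a nonzero finite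
positive Borel measure on `ℝ` supported in `(-∞, 0]`, then
`liminf_{t → ∞} ln (∫ e^{2tλ} dμ(λ)) / ln t = - d_μ⁺(0)` in the extended reals. -/
theorem liminf_log_laplace_eq_neg_upperScalingExponent
    (μ : Measure ℝ) [IsFiniteMeasure μ] (hμ : μ ≠ 0)
    (hsupp : μ (Set.Ioi 0) = 0) :
    Filter.liminf
        (fun t : ℝ =>
          ((Real.log (∫ l : ℝ, Real.exp (2 * t * l) ∂μ) / Real.log t : ℝ) : EReal))
        atTop
      = - upperScalingExponentAtZero μ :=
  liminf_log_laplace_eq_neg_upperScalingExponent' μ hμ hsupp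
end

section
/- Let μ be a nonzero finite positive Borel measure on ℝ supported in (-∞,0]. Then limsup_{t→∞} ln(∫_ℝ e^{2tλ} dμ(λ)) / ln t = -d_μ^-(0), where the equality is understood in the extended reals (if d_μ^-(0) = ∞, then the limsup equals -∞). -/
open Filter Topology MeasureTheory

/-- The pointwise lower scaling exponent of a Borel measure `μ` on `ℝ` at `0`:
`liminf_{ε → 0⁺} ln μ((-ε,ε)) / ln ε` if `μ((-ε,ε)) > 0` for all `ε > 0`, and
`∞` otherwise; valued in the extended reals. -/
noncomputable def lowerScalingExponentAtZero (μ : Measure ℝ) : EReal :=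
  open scoped Classical in
  if ∀ ε : ℝ, 0 < ε → 0 < μ (Set.Ioo (-ε) ε) then
    Filter.liminf
      (fun ε : ℝ => ((Real.log (μ (Set.Ioo (-ε) ε)).toReal / Real.log ε : ℝ) : EReal))
      (nhdsWithin 0 (Set.Ioi 0))
  else ⊤

private lemma map_inv_atTop_eq : Filter.map (fun t : ℝ => t⁻¹) atTop = nhdsWithin 0 (Set.Ioi 0) := by
  apply le_antisymm
  · exact tendsto_inv_atTop_nhdsGT_zero
  · calc nhdsWithin (0:ℝ) (Set.Ioi 0)
        = Filter.map (fun x : ℝ => x⁻¹)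
            (Filter.map (fun x : ℝ => x⁻¹) (nhdsWithin 0 (Set.Ioi 0))) := by
          rw [Filter.map_map]
          simp [Function.comp_def]
      _ ≤ Filter.map (fun x : ℝ => x⁻¹) atTop := Filter.map_mono tendsto_inv_nhdsGT_zero

/-- limsup half of Proposition 1.5: if `μ` is a nonzero finite
positive Borel measure on `ℝ` supported in `(-∞, 0]`, then
`limsup_{t → ∞} ln (∫ e^{2tλ} dμ(λ)) / ln t = - d_μ⁻(0)` in the extended reals. -/
theorem limsup_log_laplace_eq_neg_lowerScalingExponent
    (μ : Measure ℝ) [IsFiniteMeasure μ] (hμ : μ ≠ 0)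
    (hsupp : μ (Set.Ioi 0) = 0) :
    Filter.limsup
        (fun t : ℝ =>
          ((Real.log (∫ l : ℝ, Real.exp (2 * t * l) ∂μ) / Real.log t : ℝ) : EReal))
        atTop
      = - lowerScalingExponentAtZero μ := by
  classical
  set C : ℝ := (μ Set.univ).toReal with hCdef
  have hCpos : (0:ℝ) < C := by
    apply ENNReal.toReal_pos
    · exact (MeasureTheory.Measure.measure_univ_pos.mpr hμ).ne'
    · exact measure_ne_top μ _
  have hae : ∀ᵐ l ∂μ, l ≤ 0 := by
    rw [MeasureTheory.ae_iff]
    convert hsupp using 2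
    ext x; simp
  have hint : ∀ t : ℝ, 0 ≤ t → Integrable (fun l : ℝ => Real.exp (2 * t * l)) μ := by
    intro t ht
    refine Integrable.mono' (integrable_const 1)
      (Continuous.aestronglyMeasurable (by continuity)) ?_
    filter_upwards [hae] with l hl
    rw [Real.norm_eq_abs, abs_of_pos (Real.exp_pos _)]
    exact Real.exp_le_one_iff.mpr (mul_nonpos_of_nonneg_of_nonpos (by positivity) hl)
  set F : ℝ → ℝ := fun t => ∫ l : ℝ, Real.exp (2 * t * l) ∂μ with hFdef
  set G : ℝ → EReal := fun t => ((Real.log (F t) / Real.log t : ℝ) : EReal) with hGdef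
  show Filter.limsup G atTop = - lowerScalingExponentAtZero μ
  -- positivity of F
  have hFpos : ∀ t : ℝ, 0 ≤ t → 0 < F t := by
    intro t ht
    rw [hFdef]
    refine (integral_pos_iff_support_of_nonneg
      (fun l => (Real.exp_pos _).le) (hint t ht)).mpr ?_
    have hs : Function.support (fun l : ℝ => Real.exp (2 * t * l)) = Set.univ := by
      ext x; simp [Real.exp_ne_zero]
    rw [hs]
    exact MeasureTheory.Measure.measure_univ_pos.mpr hμ
  -- upper bound for F by splitting the integral
  have hFub : ∀ t : ℝ, 0 ≤ t → ∀ ε : ℝ, 0 < ε →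
      F t ≤ (μ (Set.Ioo (-ε) ε)).toReal + Real.exp (-(2 * t * ε)) * C := by
    intro t ht ε hε
    have hdecomp := integral_add_compl (measurableSet_Iic (a := -ε)) (hint t ht)
    rw [Set.compl_Iic] at hdecomp
    have h1 : ∫ l in Set.Iic (-ε), Real.exp (2 * t * l) ∂μ ≤ Real.exp (-(2 * t * ε)) * C := by
      have hmono : ∫ l in Set.Iic (-ε), Real.exp (2 * t * l) ∂μ
          ≤ ∫ _ in Set.Iic (-ε), Real.exp (-(2 * t * ε)) ∂μ := by
        refine setIntegral_mono_on ((hint t ht).integrableOn)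
          (integrableOn_const (measure_ne_top μ _)) measurableSet_Iic ?_
        intro x hx
        apply Real.exp_le_exp.mpr
        have hx' : x ≤ -ε := hx
        nlinarith
      rw [setIntegral_const, smul_eq_mul] at hmono
      calc ∫ l in Set.Iic (-ε), Real.exp (2 * t * l) ∂μ
          ≤ (μ (Set.Iic (-ε))).toReal * Real.exp (-(2 * t * ε)) := hmono
        _ ≤ C * Real.exp (-(2 * t * ε)) := by
            refine mul_le_mul_of_nonneg_right ?_ (Real.exp_pos _).le
            exact (ENNReal.toReal_le_toReal (measure_ne_top μ _) (measure_ne_top μ _)).mpr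
              (measure_mono (Set.subset_univ _))
        _ = Real.exp (-(2 * t * ε)) * C := mul_comm _ _
    have h2 : ∫ l in Set.Ioi (-ε), Real.exp (2 * t * l) ∂μ ≤ (μ (Set.Ioo (-ε) ε)).toReal := by
      have hset : (Set.Ioi (-ε) : Set ℝ) =ᶠ[ae μ] Set.Ioc (-ε) 0 := by
        refine MeasureTheory.ae_eq_set.mpr ⟨?_, ?_⟩
        · refine measure_mono_null ?_ hsupp
          intro x hx
          simp only [Set.mem_diff, Set.mem_Ioi, Set.mem_Ioc, not_and, not_le] at hx
          exact hx.2 hx.1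
        · have he : Set.Ioc (-ε) 0 \ Set.Ioi (-ε) = (∅ : Set ℝ) := by
            ext x
            simp only [Set.mem_diff, Set.mem_Ioc, Set.mem_Ioi, Set.mem_empty_iff_false, iff_false]
            rintro ⟨⟨h1, _⟩, h2⟩; exact h2 h1
          simp [he]
      rw [setIntegral_congr_set hset]
      have hmono : ∫ l in Set.Ioc (-ε) 0, Real.exp (2 * t * l) ∂μ
          ≤ ∫ _ in Set.Ioc (-ε) 0, (1:ℝ) ∂μ := by
        refine setIntegral_mono_on ((hint t ht).integrableOn)
          (integrableOn_const (measure_ne_top μ _)) measurableSet_Ioc ?_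
        intro x hx
        exact Real.exp_le_one_iff.mpr (mul_nonpos_of_nonneg_of_nonpos (by positivity) hx.2)
      rw [setIntegral_const, smul_eq_mul, mul_one] at hmono
      refine hmono.trans ?_
      refine (ENNReal.toReal_le_toReal (measure_ne_top μ _) (measure_ne_top μ _)).mpr ?_
      apply measure_mono
      intro x hx
      exact ⟨hx.1, lt_of_le_of_lt hx.2 hε⟩
    linarith [hdecomp, h1, h2]
  -- trivial upper bound for F
  have hFC : ∀ t : ℝ, 0 ≤ t → F t ≤ C := by
    intro t ht
    have hmono := integral_mono_ae (hint t ht) (integrable_const 1) ?_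
    · simpa [hFdef, hCdef, measureReal_def] using hmono
    · filter_upwards [hae] with l hl
      exact Real.exp_le_one_iff.mpr (mul_nonpos_of_nonneg_of_nonpos (by positivity) hl)
  -- lower bound for F
  have hFlb : ∀ t : ℝ, 1 ≤ t →
      Real.exp (-2) * (μ (Set.Ioo (-t⁻¹) t⁻¹)).toReal ≤ F t := by
    intro t ht
    have ht0 : (0:ℝ) < t := lt_of_lt_of_le one_pos ht
    have h1 : ∫ _ in Set.Ioo (-t⁻¹) (t⁻¹), Real.exp (-2) ∂μ
        ≤ ∫ l in Set.Ioo (-t⁻¹) (t⁻¹), Real.exp (2 * t * l) ∂μ := by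
      refine setIntegral_mono_on
        (integrableOn_const (measure_ne_top μ _))
        ((hint t ht0.le).integrableOn) measurableSet_Ioo ?_
      intro x hx
      apply Real.exp_le_exp.mpr
      have h2 : t * (-t⁻¹) < t * x := mul_lt_mul_of_pos_left hx.1 ht0
      rw [mul_neg, mul_inv_cancel₀ ht0.ne'] at h2
      nlinarith
    have h2 := setIntegral_le_integral (s := Set.Ioo (-t⁻¹) (t⁻¹)) (hint t ht0.le)
      (Filter.Eventually.of_forall fun l => (Real.exp_pos _).le)
    rw [setIntegral_const, smul_eq_mul] at h1
    calc Real.exp (-2) * (μ (Set.Ioo (-t⁻¹) t⁻¹)).toReal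
        = (μ (Set.Ioo (-t⁻¹) t⁻¹)).toReal * Real.exp (-2) := mul_comm _ _
      _ ≤ ∫ l in Set.Ioo (-t⁻¹) (t⁻¹), Real.exp (2 * t * l) ∂μ := h1
      _ ≤ F t := h2
  -- abstract upper bound: eventual comparison with powers bounds the limsup
  have hub : ∀ β : ℝ, (∀ᶠ t : ℝ in atTop, F t ≤ t ^ β) →
      Filter.limsup G atTop ≤ (β : EReal) := by
    intro β hβ
    apply Filter.limsup_le_of_le (by isBoundedDefault)
    filter_upwards [hβ, eventually_gt_atTop 1] with t h1 h2
    have ht0 : (0:ℝ) < t := lt_trans one_pos h2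
    have hFt : 0 < F t := hFpos t ht0.le
    have hlog : Real.log (F t) ≤ β * Real.log t := by
      calc Real.log (F t) ≤ Real.log (t ^ β) := Real.log_le_log hFt h1
        _ = β * Real.log t := Real.log_rpow ht0 β
    have hlt : 0 < Real.log t := Real.log_pos h2
    rw [hGdef]
    refine EReal.coe_le_coe_iff.mpr ?_
    rw [div_le_iff₀ hlt]
    linarith
  -- abstract lower bound
  have hlb : ∀ β : ℝ, (∃ᶠ t : ℝ in atTop, Real.exp (-2) * t ^ β ≤ F t) →
      (β : EReal) ≤ Filter.limsup G atTop := by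
    intro β hβ
    by_contra h
    obtain ⟨c, hc1, hc2⟩ := EReal.exists_between_coe_real (not_le.mp h)
    have hcβ : c < β := EReal.coe_lt_coe_iff.mp hc2
    have hclaim : (c : EReal) ≤ Filter.limsup G atTop := by
      refine Filter.le_limsup_of_frequently_le ?_ (by isBoundedDefault)
      have hev : ∀ᶠ t : ℝ in atTop, Real.exp 1 ≤ t ∧ 2 / (β - c) ≤ Real.log t :=
        (eventually_ge_atTop (Real.exp 1)).and
          (Real.tendsto_log_atTop.eventually_ge_atTop (2 / (β - c)))
      refine (hβ.and_eventually hev).mono ?_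
      rintro t ⟨hft, ht1, hlog2⟩
      have ht0 : (0:ℝ) < t := lt_of_lt_of_le (Real.exp_pos 1) ht1
      have hlt : 0 < Real.log t := by
        have h1 := Real.log_le_log (Real.exp_pos 1) ht1
        rw [Real.log_exp] at h1
        linarith
      have h2c : 2 ≤ (β - c) * Real.log t := by
        rw [div_le_iff₀ (by linarith : (0:ℝ) < β - c)] at hlog2
        linarith [hlog2]
      have hFt : (0:ℝ) < Real.exp (-2) * t ^ β := by positivity
      have h1 : -2 + β * Real.log t ≤ Real.log (F t) := by
        have hlogle := Real.log_le_log hFt hft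
        rwa [Real.log_mul (Real.exp_ne_zero _) (ne_of_gt (Real.rpow_pos_of_pos ht0 β)),
          Real.log_exp, Real.log_rpow ht0] at hlogle
      rw [hGdef]
      refine EReal.coe_le_coe_iff.mpr ?_
      rw [le_div_iff₀ hlt]
      nlinarith
    exact absurd hclaim (not_le.mpr hc1)
  -- unconditional: limsup ≤ 0
  have hL0 : Filter.limsup G atTop ≤ (0 : EReal) := by
    have hev : ∀ᶠ t : ℝ in atTop, G t ≤ ((Real.log C / Real.log t : ℝ) : EReal) := by
      filter_upwards [eventually_gt_atTop 1] with t ht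
      have hlt : 0 < Real.log t := Real.log_pos ht
      have ht0 : (0:ℝ) < t := lt_trans one_pos ht
      rw [hGdef]
      refine EReal.coe_le_coe_iff.mpr ?_
      have hlogle : Real.log (F t) ≤ Real.log C :=
        Real.log_le_log (hFpos t ht0.le) (hFC t ht0.le)
      gcongr
    have htend : Tendsto (fun t : ℝ => ((Real.log C / Real.log t : ℝ) : EReal))
        atTop (nhds (0:EReal)) := by
      rw [show ((0:EReal)) = ((0:ℝ):EReal) from rfl]
      rw [EReal.tendsto_coe]
      exact Tendsto.div_atTop tendsto_const_nhds Real.tendsto_log_atTop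
    calc Filter.limsup G atTop
        ≤ Filter.limsup (fun t : ℝ => ((Real.log C / Real.log t : ℝ) : EReal)) atTop :=
          Filter.limsup_le_limsup hev (by isBoundedDefault) (by isBoundedDefault)
      _ = (0:EReal) := htend.limsup_eq
  -- MAIN CASE SPLIT
  unfold lowerScalingExponentAtZero
  split_ifs with hpos
  · -- nondegenerate case
    set d : EReal := Filter.liminf
      (fun ε : ℝ => ((Real.log (μ (Set.Ioo (-ε) ε)).toReal / Real.log ε : ℝ) : EReal))
      (nhdsWithin 0 (Set.Ioi 0)) with hddef
    have hev2 : ∀ᶠ ε : ℝ in nhdsWithin 0 (Set.Ioi 0), 0 < ε ∧ ε < 1 := by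
      filter_upwards [Ioo_mem_nhdsGT_of_mem (Set.mem_Ico.mpr ⟨le_refl (0:ℝ), one_pos⟩)]
        with ε hε
      exact ⟨hε.1, hε.2⟩
    -- key upper claim
    have hclaim : ∀ b : ℝ, (b : EReal) < d → Filter.limsup G atTop ≤ ((-b : ℝ) : EReal) := by
      intro b hbd
      rcases le_or_gt b 0 with hb0 | hb0
      · exact hL0.trans (by exact_mod_cast (by linarith : (0:ℝ) ≤ -b))
      · obtain ⟨b2, hb2l, hb2r⟩ := EReal.exists_between_coe_real hbd
        have hbb2 : b < b2 := EReal.coe_lt_coe_iff.mp hb2l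
        have hb20 : 0 < b2 := lt_trans hb0 hbb2
        have hev : ∀ᶠ ε : ℝ in nhdsWithin 0 (Set.Ioi 0),
            (b2 : EReal) <
              ((Real.log (μ (Set.Ioo (-ε) ε)).toReal / Real.log ε : ℝ) : EReal) :=
          Filter.eventually_lt_of_lt_liminf hb2r (by isBoundedDefault)
        have hsmall : ∀ᶠ ε : ℝ in nhdsWithin 0 (Set.Ioi 0),
            (μ (Set.Ioo (-ε) ε)).toReal ≤ ε ^ b2 := by
          filter_upwards [hev, hev2] with ε h1 hε
          obtain ⟨hε0, hε1⟩ := hε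
          have hlogε : Real.log ε < 0 := Real.log_neg hε0 hε1
          have h1' : b2 < Real.log (μ (Set.Ioo (-ε) ε)).toReal / Real.log ε :=
            EReal.coe_lt_coe_iff.mp h1
          have hm : Real.log (μ (Set.Ioo (-ε) ε)).toReal < b2 * Real.log ε := by
            have h3 := mul_lt_mul_of_neg_right h1' hlogε
            rwa [div_mul_cancel₀ _ (ne_of_lt hlogε)] at h3
          have hmpos : 0 < (μ (Set.Ioo (-ε) ε)).toReal :=
            ENNReal.toReal_pos (hpos ε hε0).ne' (measure_ne_top μ _)
          have h4 : (μ (Set.Ioo (-ε) ε)).toReal < Real.exp (b2 * Real.log ε) := by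
            rw [← Real.exp_log hmpos]
            exact Real.exp_lt_exp.mpr hm
          refine h4.le.trans ?_
          rw [Real.rpow_def_of_pos hε0, mul_comm]
        obtain ⟨u, hu, hsub⟩ := mem_nhdsGT_iff_exists_Ioo_subset.mp hsmall
        have hεtend : Tendsto (fun t : ℝ => b2 * (Real.log t / t)) atTop (nhds 0) := by
          have h5 := (Real.isLittleO_log_id_atTop.tendsto_div_nhds_zero).const_mul b2
          simpa using h5
        have hev3 : ∀ᶠ t : ℝ in atTop, b2 * (Real.log t / t) < u :=
          hεtend.eventually_lt_const hu
        have hlo : (fun t : ℝ => b2 ^ b2 * Real.log t ^ b2) =o[atTop]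
            fun t : ℝ => t ^ (b2 - b) :=
          (isLittleO_log_rpow_rpow_atTop b2 (by linarith)).const_mul_left _
        have hev4 := hlo.def (by norm_num : (0:ℝ) < 1/2)
        have hev5 : ∀ᶠ t : ℝ in atTop, C ≤ (1/2) * t ^ (b2 - b) := by
          have h6 : Tendsto (fun t : ℝ => (1/2 : ℝ) * t ^ (b2-b)) atTop atTop :=
            (tendsto_rpow_atTop (by linarith)).const_mul_atTop (by norm_num)
          exact h6.eventually_ge_atTop C
        refine (hub (-b)) ?_
        filter_upwards [hev3, hev4, hev5, eventually_gt_atTop 1] with t h3 h4 h5 ht1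
        have ht0 : (0:ℝ) < t := lt_trans one_pos ht1
        have hlt : 0 < Real.log t := Real.log_pos ht1
        set ε : ℝ := b2 * Real.log t / t with hεdef
        have hε0 : 0 < ε := by
          rw [hεdef]; positivity
        have hεu : ε < u := by
          rw [hεdef, mul_div_assoc]; exact h3
        have hmball := hsub ⟨hε0, hεu⟩
        have hFt := hFub t ht0.le ε hε0
        have htε : 2 * t * ε = 2 * b2 * Real.log t := by
          rw [hεdef]; field_simp
        have hexp : Real.exp (-(2 * t * ε)) = t ^ (-(2*b2)) := by
          rw [htε, Real.rpow_def_of_pos ht0]; ring_nf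
        have hεpow : ε ^ b2 = b2 ^ b2 * Real.log t ^ b2 * t ^ (-b2) := by
          rw [hεdef, Real.div_rpow (by positivity) ht0.le,
            Real.mul_rpow hb20.le hlt.le, Real.rpow_neg ht0.le, div_eq_mul_inv]
        have hstep1 : (μ (Set.Ioo (-ε) ε)).toReal ≤ (1/2) * t^(b2-b) * t^(-b2) := by
          calc (μ (Set.Ioo (-ε) ε)).toReal ≤ ε ^ b2 := hmball
            _ = b2 ^ b2 * Real.log t ^ b2 * t ^ (-b2) := hεpow
            _ ≤ (1/2) * t^(b2-b) * t^(-b2) := by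
                refine mul_le_mul_of_nonneg_right ?_ (Real.rpow_nonneg ht0.le _)
                have h4' := h4
                rw [Real.norm_eq_abs, Real.norm_eq_abs,
                  abs_of_nonneg (by positivity),
                  abs_of_nonneg (Real.rpow_nonneg ht0.le _)] at h4'
                exact h4'
        have hstep2 : Real.exp (-(2 * t * ε)) * C ≤ (1/2) * t^(b2-b) * t^(-b2) := by
          rw [hexp]
          calc t ^ (-(2*b2)) * C ≤ t ^ (-b2) * ((1/2) * t^(b2-b)) := by
                refine mul_le_mul ?_ h5 hCpos.le (Real.rpow_nonneg ht0.le _)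
                exact Real.rpow_le_rpow_of_exponent_le ht1.le (by linarith)
            _ = (1/2) * t^(b2-b) * t^(-b2) := by ring
        calc F t ≤ (μ (Set.Ioo (-ε) ε)).toReal + Real.exp (-(2 * t * ε)) * C := hFt
          _ ≤ (1/2) * t^(b2-b) * t^(-b2) + (1/2) * t^(b2-b) * t^(-b2) :=
              add_le_add hstep1 hstep2
          _ = t^(b2-b) * t^(-b2) := by ring
          _ = t ^ (-b) := by
              rw [← Real.rpow_add ht0]; ring_nf
    -- upper bound
    have hupper : Filter.limsup G atTop ≤ -d := by
      by_contra h
      obtain ⟨c, hc1, hc2⟩ := EReal.exists_between_coe_real (not_le.mp h)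
      have hcd : ((-c : ℝ) : EReal) < d := by
        rw [EReal.coe_neg]; exact EReal.neg_lt_comm.mp hc1
      have h7 := hclaim (-c) hcd
      rw [neg_neg] at h7
      exact absurd h7 (not_le.mpr hc2)
    -- lower bound
    have hlower : -d ≤ Filter.limsup G atTop := by
      by_contra h
      obtain ⟨c, hc1, hc2⟩ := EReal.exists_between_coe_real (not_le.mp h)
      have hdc : d < ((-c : ℝ) : EReal) := by
        rw [EReal.coe_neg]; exact EReal.lt_neg_comm.mp hc2
      have hfreq : ∃ᶠ ε : ℝ in nhdsWithin 0 (Set.Ioi 0),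
          ((Real.log (μ (Set.Ioo (-ε) ε)).toReal / Real.log ε : ℝ) : EReal)
            < ((-c : ℝ) : EReal) :=
        Filter.frequently_lt_of_liminf_lt (by isBoundedDefault) hdc
      have hfreq2 := hfreq.and_eventually hev2
      rw [← map_inv_atTop_eq] at hfreq2
      have hfreq3 := Filter.frequently_map.mp hfreq2
      have hfreq4 : ∃ᶠ t : ℝ in atTop, Real.exp (-2) * t ^ c ≤ F t := by
        refine hfreq3.mono ?_
        rintro t ⟨h1, h2, h3⟩
        have ht0 : (0:ℝ) < t := inv_pos.mp h2
        have ht1 : 1 < t := by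
          have h4 := mul_lt_mul_of_pos_right h3 ht0
          rwa [inv_mul_cancel₀ ht0.ne', one_mul] at h4
        have hlogt : 0 < Real.log t := Real.log_pos ht1
        have hloginv : Real.log (t⁻¹) = -Real.log t := Real.log_inv t
        have h1' : Real.log (μ (Set.Ioo (-(t⁻¹)) (t⁻¹))).toReal / Real.log (t⁻¹) < -c :=
          EReal.coe_lt_coe_iff.mp h1
        have hmpos : 0 < (μ (Set.Ioo (-(t⁻¹)) (t⁻¹))).toReal :=
          ENNReal.toReal_pos (hpos _ h2).ne' (measure_ne_top μ _)
        have hN : Real.log (t⁻¹) < 0 := by rw [hloginv]; linarith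
        have hX : c * Real.log t < Real.log (μ (Set.Ioo (-(t⁻¹)) (t⁻¹))).toReal := by
          have h5 := mul_lt_mul_of_neg_right h1' hN
          rw [div_mul_cancel₀ _ (ne_of_lt hN)] at h5
          rw [hloginv] at h5
          nlinarith
        have hpow : t ^ c < (μ (Set.Ioo (-(t⁻¹)) (t⁻¹))).toReal := by
          rw [Real.rpow_def_of_pos ht0]
          exact (Real.lt_log_iff_exp_lt hmpos).mp (by rw [mul_comm]; exact hX)
        calc Real.exp (-2) * t ^ c
            ≤ Real.exp (-2) * (μ (Set.Ioo (-(t⁻¹)) (t⁻¹))).toReal :=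
              mul_le_mul_of_nonneg_left hpow.le (Real.exp_pos _).le
          _ ≤ F t := hFlb t ht1.le
      have h8 := hlb c hfreq4
      exact absurd h8 (not_le.mpr hc1)
    exact le_antisymm hupper hlower
  · -- degenerate case: some small ball has measure zero
    push_neg at hpos
    obtain ⟨ε0, hε0, hμ0⟩ := hpos
    have hμ0' : μ (Set.Ioo (-ε0) ε0) = 0 := le_antisymm hμ0 zero_le
    have hβ : ∀ β : ℝ, Filter.limsup G atTop ≤ (β : EReal) := by
      intro β
      apply hub
      have hev1 : ∀ᶠ t : ℝ in atTop, ‖β * Real.log t‖ ≤ ε0 * ‖t‖ :=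
        (Real.isLittleO_log_id_atTop.const_mul_left β).def hε0
      filter_upwards [hev1, eventually_gt_atTop 1,
        eventually_ge_atTop (Real.log C / ε0)] with t h1 ht1 h2
      have ht0 : (0:ℝ) < t := lt_trans one_pos ht1
      have ha : -(ε0 * t) ≤ β * Real.log t := by
        rw [Real.norm_eq_abs, Real.norm_eq_abs, abs_of_pos ht0] at h1
        linarith [(abs_le.mp h1).1]
      have hb : Real.log C ≤ ε0 * t := by
        rw [div_le_iff₀ hε0] at h2
        linarith
      have hbound : -(2 * t * ε0) + Real.log C ≤ β * Real.log t := by nlinarith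
      have hFle := hFub t ht0.le ε0 hε0
      rw [hμ0', ENNReal.toReal_zero, zero_add] at hFle
      calc F t ≤ Real.exp (-(2*t*ε0)) * C := hFle
        _ = Real.exp (-(2*t*ε0) + Real.log C) := by
            rw [Real.exp_add, Real.exp_log hCpos]
        _ ≤ Real.exp (β * Real.log t) := Real.exp_le_exp.mpr hbound
        _ = t ^ β := by rw [Real.rpow_def_of_pos ht0, mul_comm]
    rw [EReal.neg_top]
    by_contra h
    obtain ⟨c, hc1, hc2⟩ := EReal.exists_between_coe_real (bot_lt_iff_ne_bot.mpr h)
    exact absurd (hβ c) (not_le.mpr hc2)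
end
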